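/- arXiv:1102.5228 — 2 statements merged into one kernel-verified Lean document; each statement's English description precedes it below -/
import Mathlib

section
/- Let d, m be positive integers and let C : ℝ^d × ℝ^d → Matrix (Fin m) (Fin m) ℂ satisfy C(x,y) = conjugate transpose of C(y,x) for all x,y. Then C is an m-variate positive definite function on ℝ^d if and only if for every r > 0 the function (x,y) ↦ sinh*(r C(x,y)), where sinh* denotes the componentwise (entrywise) hyperbolic sine, is an m-variate positive definite function on ℝ^d. -/
open scoped Matrix BigOperators ComplexOrder

/-- An `m`-variate positive definite function (cross covariance function) on `ℝ^d`. -/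
def IsCrossPosDef (d m : ℕ) (C : (Fin d → ℝ) → (Fin d → ℝ) → Matrix (Fin m) (Fin m) ℂ) : Prop :=
  (∀ x y, C x y = (C y x)ᴴ) ∧
  ∀ (n : ℕ) (x : Fin n → (Fin d → ℝ)) (a : Fin n → (Fin m → ℂ)),
    0 ≤ ∑ p, ∑ q, a p ⬝ᵥ (C (x p) (x q)).mulVec (star (a q))

/-
A function `C` is positive definite exactly when all block Gram matrices
`[C (x p) (x q) j k]_{(p,j),(q,k)}` are positive semidefinite. By the Schur product theorem the
entrywise odd powers of a positive semidefinite matrix are positive semidefinite, and the entrywise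
`sinh` is a convergent series of nonnegative multiples of them; since the positive semidefinite
cone is closed, it is again positive semidefinite. Conversely `r⁻¹ sinh (r z) → z` as `r → 0⁺`, so
the Gram matrix of `C` is a limit of positive multiples of the Gram matrices of `sinh*(r C)`.
-/

open Filter Topology

lemma Complex.tendsto_inv_smul_sinh_mul (z : ℂ) :
    Tendsto (fun r : ℝ => r⁻¹ • Complex.sinh (r * z)) (𝓝[≠] 0) (𝓝 z) := by
  have hderiv : HasDerivAt (fun r : ℝ => Complex.sinh (r * z)) z 0 := by
    simpa using HasDerivAt.comp_ofReal (z := 0)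
      ((Complex.hasDerivAt_sinh _).comp _ ((hasDerivAt_id _).mul_const z))
  refine (hasDerivAt_iff_tendsto_slope.mp hderiv).congr fun r => ?_
  simp [slope_def_module]

namespace Matrix

section RCLike

variable {𝕜 ι : Type*} [RCLike 𝕜]

lemma isClosed_setOf_posSemidef [Fintype ι] : IsClosed {M : Matrix ι ι 𝕜 | M.PosSemidef} := by
  simp only [posSemidef_iff_dotProduct_mulVec, Set.ofPred_and, Set.ofPred_forall]
  exact (isClosed_eq continuous_id.matrix_conjTranspose continuous_id).inter <|
    isClosed_iInter fun v => isClosed_le continuous_const <|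
      continuous_const.dotProduct (continuous_id.matrix_mulVec continuous_const)

lemma PosSemidef.of_hasSum [Fintype ι] {α : Type*} {f : α → Matrix ι ι 𝕜} {M : Matrix ι ι 𝕜}
    (hM : HasSum f M) (hf : ∀ a, (f a).PosSemidef) : M.PosSemidef :=
  isClosed_setOf_posSemidef.mem_of_tendsto hM <|
    Eventually.of_forall fun s => posSemidef_sum s fun a _ => hf a

lemma PosSemidef.map_pow_succ {M : Matrix ι ι 𝕜} (hM : M.PosSemidef) (k : ℕ) :
    (M.map (· ^ (k + 1))).PosSemidef := by
  induction k with
  | zero => simpa using hM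
  | succ k ih =>
    have hsplit : M.map (· ^ (k + 2)) = M.map (· ^ (k + 1)) ⊙ M := by
      ext i j
      simp [pow_succ]
    rw [hsplit]
    exact ih.hadamard hM

end RCLike

variable {ι : Type*}

lemma hasSum_map_sinh (M : Matrix ι ι ℂ) :
    HasSum (fun t : ℕ => ((2 * t + 1).factorial : ℝ)⁻¹ • M.map (· ^ (2 * t + 1)))
      (M.map Complex.sinh) :=
  Pi.hasSum.2 fun i => Pi.hasSum.2 fun j => by
    simpa [div_eq_inv_mul] using Complex.hasSum_sinh (M i j)

lemma PosSemidef.map_sinh [Fintype ι] {M : Matrix ι ι ℂ} (hM : M.PosSemidef) :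
    (M.map Complex.sinh).PosSemidef :=
  .of_hasSum M.hasSum_map_sinh fun t => (hM.map_pow_succ (2 * t)).smul (by positivity)

lemma PosSemidef.map_sinh_mul [Fintype ι] {M : Matrix ι ι ℂ} (hM : M.PosSemidef) {r : ℝ}
    (hr : 0 ≤ r) : (M.map fun z => Complex.sinh (r * z)).PosSemidef := by
  have hsmul : (r • M).map Complex.sinh = M.map fun z => Complex.sinh (r * z) := by
    ext i j
    simp [Complex.real_smul]
  exact hsmul ▸ (hM.smul hr).map_sinh

lemma posSemidef_of_forall_map_sinh_mul [Fintype ι] {M : Matrix ι ι ℂ}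
    (h : ∀ r : ℝ, 0 < r → (M.map fun z => Complex.sinh (r * z)).PosSemidef) : M.PosSemidef := by
  have hlim : Tendsto (fun r : ℝ => r⁻¹ • M.map fun z => Complex.sinh (r * z)) (𝓝[>] 0) (𝓝 M) :=
    tendsto_pi_nhds.2 fun i => tendsto_pi_nhds.2 fun j =>
      (Complex.tendsto_inv_smul_sinh_mul (M i j)).mono_left <|
        nhdsWithin_mono _ fun r hr => ne_of_gt hr
  exact isClosed_setOf_posSemidef.mem_of_tendsto hlim <|
    eventually_nhdsWithin_of_forall fun r hr => (h r hr).smul (inv_nonneg.2 (le_of_lt hr))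

end Matrix

section CrossGram

variable {X ι κ : Type*}

def crossGram (C : X → X → Matrix κ κ ℂ) (x : ι → X) : Matrix (ι × κ) (ι × κ) ℂ :=
  Matrix.of fun i j => C (x i.1) (x j.1) i.2 j.2

lemma isHermitian_crossGram {C : X → X → Matrix κ κ ℂ} (hC : ∀ x y, C x y = (C y x)ᴴ)
    (x : ι → X) : (crossGram C x).IsHermitian := by
  ext i j
  simp [crossGram, hC (x j.1) (x i.1)]

lemma sum_dotProduct_mulVec_star_eq_crossGram [Fintype ι] [Fintype κ] (C : X → X → Matrix κ κ ℂ)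
    (x : ι → X) (a : ι → κ → ℂ) :
    ∑ p, ∑ q, a p ⬝ᵥ C (x p) (x q) *ᵥ star (a q) =
      (fun i => a i.1 i.2) ⬝ᵥ crossGram C x *ᵥ star (fun i => a i.1 i.2) := by
  simp only [dotProduct, Matrix.mulVec, crossGram, Matrix.of_apply, Pi.star_apply,
    Fintype.sum_prod_type, Finset.mul_sum]
  exact Finset.sum_congr rfl fun p _ => Finset.sum_comm

lemma crossGram_map_sinh_mul (C : X → X → Matrix κ κ ℂ) (r : ℝ) (x : ι → X) :
    crossGram (fun x y => Matrix.of fun j k => Complex.sinh (r * C x y j k)) x =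
      (crossGram C x).map fun z => Complex.sinh (r * z) :=
  rfl

lemma of_sinh_mul_eq_conjTranspose {C : X → X → Matrix κ κ ℂ} (hC : ∀ x y, C x y = (C y x)ᴴ)
    (r : ℝ) (x y : X) :
    (Matrix.of fun j k => Complex.sinh (r * C x y j k)) =
      (Matrix.of fun j k => Complex.sinh (r * C y x j k))ᴴ := by
  ext j k
  simp [hC x y, ← Complex.sinh_conj]

end CrossGram

lemma isCrossPosDef_iff_forall_posSemidef {d m : ℕ}
    {C : (Fin d → ℝ) → (Fin d → ℝ) → Matrix (Fin m) (Fin m) ℂ} (hC : ∀ x y, C x y = (C y x)ᴴ) :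
    IsCrossPosDef d m C ↔ ∀ (n : ℕ) (x : Fin n → Fin d → ℝ), (crossGram C x).PosSemidef := by
  simp only [IsCrossPosDef, and_iff_right hC, sum_dotProduct_mulVec_star_eq_crossGram,
    Matrix.posSemidef_iff_dotProduct_mulVec, isHermitian_crossGram hC, true_and]
  refine forall₂_congr fun n x => ⟨fun h v => ?_, fun h a => ?_⟩
  · simpa only [Prod.mk.eta, star_star] using h fun p j => star v (p, j)
  · simpa using h (star fun i => a i.1 i.2)

theorem crossPosDef_iff_starSinh_general (d m : ℕ)
    (C : (Fin d → ℝ) → (Fin d → ℝ) → Matrix (Fin m) (Fin m) ℂ)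
    (hHerm : ∀ x y, C x y = (C y x)ᴴ) :
    IsCrossPosDef d m C ↔
      ∀ r : ℝ, 0 < r →
        IsCrossPosDef d m
          (fun x y => Matrix.of fun j k => Complex.sinh (r * C x y j k)) := by
  simp only [isCrossPosDef_iff_forall_posSemidef hHerm,
    isCrossPosDef_iff_forall_posSemidef (of_sinh_mul_eq_conjTranspose hHerm _),
    crossGram_map_sinh_mul]
  exact ⟨fun h r hr n x => (h n x).map_sinh_mul hr.le,
    fun h n x => Matrix.posSemidef_of_forall_map_sinh_mul fun r hr => h r hr n x⟩

/-- `C` is an `m`-variate positive definite function on `ℝ^d` iff for every `r > 0` the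
componentwise hyperbolic sine `sinh*(rC)` is one. -/
theorem crossPosDef_iff_starSinh (d m : ℕ) (hd : 0 < d) (hm : 0 < m)
    (C : (Fin d → ℝ) → (Fin d → ℝ) → Matrix (Fin m) (Fin m) ℂ)
    (hHerm : ∀ x y, C x y = (C y x)ᴴ) :
    IsCrossPosDef d m C ↔
      ∀ r : ℝ, 0 < r →
        IsCrossPosDef d m
          (fun x y => Matrix.of fun j k => Complex.sinh (r * C x y j k)) :=
  crossPosDef_iff_starSinh_general d m C hHerm
end

section
/- Let d, m be positive integers, let V ∈ Matrix (Fin m) (Fin m) ℂ be unitary, let D₁,…,D_m : ℝ^d × ℝ^d → ℂ satisfy D_j(x,y) = conj(D_j(y,x)) for all x,y and j, and define C(x,y) = V · diag(D₁(x,y),…,D_m(x,y)) · V*, where V* is the conjugate transpose of V. Then the n-fold matrix power (x,y) ↦ C(x,y)^n is an m-variate positive definite function on ℝ^d for every n ∈ ℕ, n ≥ 1, if and only if each D_j, j = 1,…,m, is a positive definite kernel on ℝ^d. -/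
open scoped Matrix BigOperators ComplexOrder

/-- A (complex) positive definite kernel on `ℝ^d`. -/
def IsPDKernel (d : ℕ) (K : (Fin d → ℝ) → (Fin d → ℝ) → ℂ) : Prop :=
  (∀ x y, K x y = starRingEnd ℂ (K y x)) ∧
  ∀ (n : ℕ) (x : Fin n → (Fin d → ℝ)) (a : Fin n → ℂ),
    0 ≤ ∑ p, ∑ q, a p * K (x p) (x q) * starRingEnd ℂ (a q)

/-!
Since `V` is unitary, `C(x,y)^n = V diag(D₁(x,y)^n, …, D_m(x,y)^n) V*`, and the quadratic form of
`V diag(F₁, …, F_m) V*` at `a₁, …, a_N` splits as the sum over `j` of the quadratic forms of the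
kernels `F_j` at the `j`-th coordinates of `aₚ V`. Hence positive definite `D_j` give positive
definite `C^n`, because pointwise powers of positive definite kernels are positive definite (Schur
product theorem). Conversely, testing `C` against multiples of the `j`-th row of `V*` isolates `D_j`.
-/

open Matrix

namespace Matrix

variable {ι κ R : Type*} [CommRing R]

theorem dotProduct_mulVec_eq_sum [Fintype ι] (M : Matrix ι ι R) (a b : ι → R) :
    a ⬝ᵥ M *ᵥ b = ∑ p, ∑ q, a p * M p q * b q := by
  simp [dotProduct, mulVec, Finset.mul_sum, mul_assoc]

variable [StarRing R]

theorem star_dotProduct_mulVec_star [Fintype ι] (M : Matrix ι ι R) (a b : ι → R) :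
    star (a ⬝ᵥ M *ᵥ star b) = b ⬝ᵥ Mᴴ *ᵥ star a := by
  rw [← star_dotProduct_star, star_mulVec, star_star, dotProduct_mulVec]

theorem posSemidef_iff_sum_mul_mul_star [Fintype ι] [PartialOrder R] {M : Matrix ι ι R} :
    M.PosSemidef ↔ M.IsHermitian ∧ ∀ a : ι → R, 0 ≤ ∑ p, ∑ q, a p * M p q * star (a q) := by
  rw [posSemidef_iff_dotProduct_mulVec]
  refine and_congr_right fun _ => ⟨fun h a => ?_, fun h x => ?_⟩
  · simpa [dotProduct_mulVec_eq_sum] using h (star a)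
  · simpa [dotProduct_mulVec_eq_sum] using h (star x)

theorem conjTranspose_mul_diagonal_mul_conjTranspose [Fintype κ] [DecidableEq κ]
    (V : Matrix ι κ R) (f : κ → R) : (V * diagonal f * Vᴴ)ᴴ = V * diagonal (star f) * Vᴴ := by
  simp [conjTranspose_mul, Matrix.mul_assoc]

theorem dotProduct_mul_diagonal_mul_conjTranspose_mulVec_star [Fintype ι] [Fintype κ]
    [DecidableEq κ] (V : Matrix ι κ R) (f : κ → R) (a b : ι → R) :
    a ⬝ᵥ (V * diagonal f * Vᴴ) *ᵥ star b = ∑ j, (a ᵥ* V) j * f j * star ((b ᵥ* V) j) := by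
  rw [dotProduct_mulVec, ← vecMul_vecMul, ← vecMul_vecMul, ← dotProduct_mulVec,
    mulVec_conjTranspose, star_star]
  simp [dotProduct, vecMul_diagonal]

theorem conjTranspose_dotProduct_mul_diagonal_mul_conjTranspose_mulVec_star [Fintype ι]
    [DecidableEq ι] {V : Matrix ι ι R} (hV : V ∈ unitaryGroup ι R) (f : ι → R) (j : ι) :
    Vᴴ j ⬝ᵥ (V * diagonal f * Vᴴ) *ᵥ star (Vᴴ j) = f j := by
  have hrow : Vᴴ j ᵥ* V = Pi.single j 1 := by
    have hVV : Vᴴ * V = 1 := mem_unitaryGroup_iff'.mp hV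
    rw [← mul_apply_eq_vecMul, hVV]
    ext k
    simp [one_apply, Pi.single_apply, eq_comm]
  rw [dotProduct_mul_diagonal_mul_conjTranspose_mulVec_star, hrow]
  simp [Pi.single_apply]

theorem mul_diagonal_mul_conjTranspose_pow [Fintype ι] [DecidableEq ι] {V : Matrix ι ι R}
    (hV : V ∈ unitaryGroup ι R) (f : ι → R) (n : ℕ) :
    (V * diagonal f * Vᴴ) ^ n = V * diagonal (f ^ n) * Vᴴ := by
  simpa [diagonal_pow, star_eq_conjTranspose] using
    (map_pow (Unitary.conjStarAlgAut R _ ⟨V, hV⟩) (diagonal f) n).symm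

end Matrix

def kernelMatrix {X ι : Type*} (K : X → X → ℂ) (x : ι → X) : Matrix ι ι ℂ :=
  Matrix.of fun p q => K (x p) (x q)

section Kernel

variable {d : ℕ}

theorem isPDKernel_iff_posSemidef {K : (Fin d → ℝ) → (Fin d → ℝ) → ℂ} :
    IsPDKernel d K ↔ ∀ (N : ℕ) (x : Fin N → Fin d → ℝ), (kernelMatrix K x).PosSemidef := by
  simp only [IsPDKernel, posSemidef_iff_sum_mul_mul_star, starRingEnd_apply]
  refine ⟨fun ⟨hK, hpos⟩ N x => ⟨?_, hpos N x⟩, fun h => ⟨fun x y => ?_, fun N x => (h N x).2⟩⟩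
  · ext p q
    simp [kernelMatrix, hK (x q) (x p)]
  · simpa [kernelMatrix] using ((h 2 ![x, y]).1.apply 0 1).symm

theorem isPDKernel_one : IsPDKernel d fun _ _ => 1 := by
  refine isPDKernel_iff_posSemidef.mpr fun N x => ?_
  convert posSemidef_vecMulVec_self_star (1 : Fin N → ℂ)
  ext p q
  simp [kernelMatrix, vecMulVec]

theorem IsPDKernel.mul {K L : (Fin d → ℝ) → (Fin d → ℝ) → ℂ} (hK : IsPDKernel d K)
    (hL : IsPDKernel d L) : IsPDKernel d fun x y => K x y * L x y := by
  rw [isPDKernel_iff_posSemidef] at *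
  exact fun N x => (hK N x).hadamard (hL N x)

theorem IsPDKernel.pow {K : (Fin d → ℝ) → (Fin d → ℝ) → ℂ} (hK : IsPDKernel d K) (n : ℕ) :
    IsPDKernel d fun x y => K x y ^ n := by
  induction n with
  | zero => simpa only [pow_zero] using isPDKernel_one
  | succ n ih => simpa only [pow_succ] using ih.mul hK

end Kernel

section Cross

variable {d m : ℕ}

theorem isCrossPosDef_mul_diagonal_mul_conjTranspose (V : Matrix (Fin m) (Fin m) ℂ)
    {D : Fin m → (Fin d → ℝ) → (Fin d → ℝ) → ℂ} (hD : ∀ j, IsPDKernel d (D j)) :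
    IsCrossPosDef d m fun x y => V * diagonal (fun j => D j x y) * Vᴴ := by
  refine ⟨fun x y => ?_, fun N x a => ?_⟩
  · have hstar : star (fun j => D j y x) = fun j => D j x y :=
      funext fun j => ((hD j).1 x y).symm
    rw [conjTranspose_mul_diagonal_mul_conjTranspose, hstar]
  · have hswap : ∑ p, ∑ q, a p ⬝ᵥ (V * diagonal (fun j => D j (x p) (x q)) * Vᴴ) *ᵥ star (a q)
        = ∑ j, ∑ p, ∑ q, (a p ᵥ* V) j * D j (x p) (x q) * star ((a q ᵥ* V) j) := by
      simp only [dotProduct_mul_diagonal_mul_conjTranspose_mulVec_star]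
      exact (Finset.sum_congr rfl fun _ _ => Finset.sum_comm).trans Finset.sum_comm
    rw [hswap]
    exact Finset.sum_nonneg fun j _ => (hD j).2 N x fun p => (a p ᵥ* V) j

theorem IsCrossPosDef.isPDKernel_dotProduct_mulVec_star
    {C : (Fin d → ℝ) → (Fin d → ℝ) → Matrix (Fin m) (Fin m) ℂ} (hC : IsCrossPosDef d m C)
    (e : Fin m → ℂ) : IsPDKernel d fun x y => e ⬝ᵥ C x y *ᵥ star e := by
  refine ⟨fun x y => ?_, fun N x α => ?_⟩
  · rw [starRingEnd_apply, star_dotProduct_mulVec_star, ← hC.1]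
  · convert hC.2 N x fun p => α p • e using 3 with p _ q _
    simp only [smul_dotProduct, star_smul, mulVec_smul, dotProduct_smul, smul_eq_mul,
      starRingEnd_apply]
    ring

end Cross

theorem matrixPow_crossPosDef_iff_general (d m : ℕ)
    (V : Matrix (Fin m) (Fin m) ℂ) (hV : V ∈ Matrix.unitaryGroup (Fin m) ℂ)
    (D : Fin m → (Fin d → ℝ) → (Fin d → ℝ) → ℂ)
    (C : (Fin d → ℝ) → (Fin d → ℝ) → Matrix (Fin m) (Fin m) ℂ)
    (hC : ∀ x y, C x y = V * Matrix.diagonal (fun j => D j x y) * Vᴴ) :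
    (∀ n : ℕ, 1 ≤ n → IsCrossPosDef d m (fun x y => (C x y) ^ n)) ↔
      ∀ j, IsPDKernel d (D j) := by
  have hCpow : ∀ n, (fun x y => C x y ^ n) =
      fun x y => V * diagonal (fun j => D j x y ^ n) * Vᴴ := by
    intro n
    funext x y
    rw [hC, mul_diagonal_mul_conjTranspose_pow hV]
    rfl
  constructor
  · intro h j
    have hC1 := h 1 le_rfl
    rw [hCpow] at hC1
    simpa only [pow_one, conjTranspose_dotProduct_mul_diagonal_mul_conjTranspose_mulVec_star hV] using
      hC1.isPDKernel_dotProduct_mulVec_star (Vᴴ j)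
  · intro h n _
    rw [hCpow]
    exact isCrossPosDef_mul_diagonal_mul_conjTranspose V fun j => (h j).pow n

/-- For `C(x,y) = V diag(D₁(x,y),…,D_m(x,y)) V*` with `V` unitary, the `n`-fold
matrix power `C(x,y)^n` is an `m`-variate positive definite function for every
`n ≥ 1` iff all the `D_j` are positive definite kernels. -/
theorem matrixPow_crossPosDef_iff (d m : ℕ) (hd : 0 < d) (hm : 0 < m)
    (V : Matrix (Fin m) (Fin m) ℂ) (hV : V ∈ Matrix.unitaryGroup (Fin m) ℂ)
    (D : Fin m → (Fin d → ℝ) → (Fin d → ℝ) → ℂ)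
    (hD : ∀ j x y, D j x y = starRingEnd ℂ (D j y x))
    (C : (Fin d → ℝ) → (Fin d → ℝ) → Matrix (Fin m) (Fin m) ℂ)
    (hC : ∀ x y, C x y = V * Matrix.diagonal (fun j => D j x y) * Vᴴ) :
    (∀ n : ℕ, 1 ≤ n → IsCrossPosDef d m (fun x y => (C x y) ^ n)) ↔
      ∀ j, IsPDKernel d (D j) :=
  matrixPow_crossPosDef_iff_general d m V hV D C hC
end
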